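/- There is a constant κ₁ > 10 such that for every κ ≥ κ₁ there exist k₀ = k₀(κ) > 0 and constants c(N), C(N) > 0 with the following property. Fix N ≥ 2, an N-ary tree V of depth L ≥ 1, and radially decaying weights with parameter ε ≤ k₀/N; fix y_C ∈ C and B_C = B(y_C, r_C) with r_C = κK₁W_C for each C ∈ 𝒞, where K₁ is an absolute constant with C ⊂ κ^{−1}B_C for all C. Then there exists a family of annuli {A_C}_{C∈𝒞₀}, A_C = {x ∈ ℝ² : r_C ≤ |x − y_C| ≤ 10^{M_C+1}r_C} for some integer M_C ≥ 0, such that: (1) c(N)·W_{π(C)} ≤ 10^{M_C+1}r_C ≤ C(N)·W_{π(C)} for each C ∈ 𝒞₀; (2) A_C ⊂ ½B_{π(C)} for each C ∈ 𝒞₀; and (3) the family {A_C}_{C∈𝒞₀} is pairwise disjoint. -/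

import Mathlib

open MeasureTheory Set Metric
open scoped Classical

noncomputable section

abbrev Pt : Type := EuclideanSpace ℝ (Fin 2)

/-- The point `(a, b)` of the Euclidean plane. -/
def pt (a b : ℝ) : Pt := WithLp.toLp 2 ![a, b]

/-- `V` is an `N`-ary tree: a finite prefix-closed set of strings over the alphabet
`{0, …, N−1}` containing the empty string (the root), in which every non-leaf node
has at least `2` (and, automatically, at most `N`) children. -/
def IsNaryTree (N : ℕ) (V : Finset (List ℕ)) : Prop :=
  [] ∈ V ∧
  (∀ v ∈ V, ∀ u : List ℕ, u <+: v → u ∈ V) ∧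
  (∀ v ∈ V, ∀ i ∈ v, i < N) ∧
  (∀ v ∈ V, (∃ a : ℕ, v ++ [a] ∈ V) →
    2 ≤ ((Finset.range N).filter (fun a => v ++ [a] ∈ V)).card)

/-- `v` is a leaf of `V`. -/
def IsLeaf (V : Finset (List ℕ)) (v : List ℕ) : Prop :=
  v ∈ V ∧ ∀ a : ℕ, v ++ [a] ∉ V

/-- The tree has depth at least one, i.e. the root is not a leaf. -/
def DepthAtLeastOne (V : Finset (List ℕ)) : Prop := ∃ a : ℕ, [a] ∈ V

/-- Radially decaying weights with parameter `ε` (with the convention `W ∅ = 1`). -/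
def RadiallyDecaying (V : Finset (List ℕ)) (W : List ℕ → ℝ) (ε : ℝ) : Prop :=
  W [] = 1 ∧ (∀ v ∈ V, 0 < W v) ∧ ∀ v ∈ V, v ≠ [] → W v ≤ ε * W v.dropLast

/-- The map `Ψ(v) = ∑_{i=1}^{d(v)} W(π_{i−1}(v))·v_i/(N−1)`. -/
def Psi (N : ℕ) (W : List ℕ → ℝ) (v : List ℕ) : ℝ :=
  ∑ i ∈ Finset.range v.length, W (v.take i) * (v.getD i 0 : ℝ) / ((N : ℝ) - 1)

/-- `Δ = min_{v ∈ ∂V} W_v`. -/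
def Delta (V : Finset (List ℕ)) (W : List ℕ → ℝ) : ℝ :=
  sInf {w : ℝ | ∃ v, IsLeaf V v ∧ w = W v}

def E1set (Δ : ℝ) : Set Pt :=
  {x | (∃ n : ℤ, x 0 = (n : ℝ) * Δ) ∧ x 0 ∈ Ico (0 : ℝ) 2 ∧ x 1 = 0}

def E2set (N : ℕ) (V : Finset (List ℕ)) (W : List ℕ → ℝ) : Set Pt :=
  {x | ∃ v, IsLeaf V v ∧ x = pt (Psi N W v) (W v)}

def Eset (N : ℕ) (V : Finset (List ℕ)) (W : List ℕ → ℝ) : Set Pt :=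
  E1set (Delta V W) ∪ E2set N V W

/-- Bundle of standing hypotheses: `N ≥ 2`, `V` an `N`-ary tree, `0 < ε ≤ k₀/N`,
and radially decaying weights with parameter `ε`. -/
def TreeHyp (k₀ : ℝ) (N : ℕ) (V : Finset (List ℕ)) (W : List ℕ → ℝ) (ε : ℝ) : Prop :=
  2 ≤ N ∧ IsNaryTree N V ∧ 0 < ε ∧ ε ≤ k₀ / N ∧ RadiallyDecaying V W ε

/-- Distance between two subsets of the plane. -/
def setDist (s t : Set Pt) : ℝ := sInf {d : ℝ | ∃ x ∈ s, ∃ y ∈ t, d = dist x y}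

/-- A dyadic square arising from `Q⁰ = [−3,5)²` by `k` repeated bisections. -/
structure DSquare where
  k : ℕ
  i : ℕ
  j : ℕ
  hi : i < 2 ^ k
  hj : j < 2 ^ k

namespace DSquare

def side (Q : DSquare) : ℝ := 8 / 2 ^ Q.k

def x0 (Q : DSquare) : ℝ := -3 + Q.i * Q.side

def y0 (Q : DSquare) : ℝ := -3 + Q.j * Q.side

/-- The (half-open) square itself, as a subset of the plane. -/
def set (Q : DSquare) : Set Pt :=
  {x | x 0 ∈ Ico Q.x0 (Q.x0 + Q.side) ∧ x 1 ∈ Ico Q.y0 (Q.y0 + Q.side)}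

/-- The concentric dilate `λQ`. -/
def dil (Q : DSquare) (lam : ℝ) : Set Pt :=
  {x | |x 0 - (Q.x0 + Q.side / 2)| ≤ lam * Q.side / 2 ∧
       |x 1 - (Q.y0 + Q.side / 2)| ≤ lam * Q.side / 2}

/-- The dyadic ancestor of `Q` at generation `k' ≤ Q.k`. -/
def anc (Q : DSquare) (k' : ℕ) (h : k' ≤ Q.k) : DSquare :=
  ⟨k', Q.i / 2 ^ (Q.k - k'), Q.j / 2 ^ (Q.k - k'), by
      have h2 : 0 < 2 ^ (Q.k - k') := pow_pos (by norm_num) _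
      rw [Nat.div_lt_iff_lt_mul h2, ← pow_add, Nat.add_sub_cancel' h]
      exact Q.hi, by
      have h2 : 0 < 2 ^ (Q.k - k') := pow_pos (by norm_num) _
      rw [Nat.div_lt_iff_lt_mul h2, ← pow_add, Nat.add_sub_cancel' h]
      exact Q.hj⟩

end DSquare

def Q0set : Set Pt := {x | x 0 ∈ Ico (-3 : ℝ) 5 ∧ x 1 ∈ Ico (-3 : ℝ) 5}

/-- `Q` belongs to the Whitney decomposition `𝒲` of `Q⁰` relative to `E`:
`3Q ∩ E` has at most one point, while `3Q'' ∩ E` has at least two points for every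
proper dyadic ancestor `Q''` of `Q`. -/
def InWhitney (E : Set Pt) (Q : DSquare) : Prop :=
  (Q.dil 3 ∩ E).Subsingleton ∧
  ∀ k' : ℕ, ∀ h : k' < Q.k, ¬ ((Q.anc k' h.le).dil 3 ∩ E).Subsingleton

/-- `Q ↔ Q'`, i.e. `1.1Q ∩ 1.1Q' ≠ ∅`. -/
def Touch (Q Q' : DSquare) : Prop := (Q.dil 1.1 ∩ Q'.dil 1.1).Nonempty

/-- `‖F‖_{L^{2,p}(Ω)}^p = ∫_Ω |∇²F|^p`. -/
def sobEnergy (p : ℝ) (Ω : Set Pt) (F : Pt → ℝ) : ℝ :=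
  ∫ x in Ω, ‖iteratedFDeriv ℝ 2 F x‖ ^ p

/-- The seminorm `‖F‖_{L^{2,p}(Ω)}`. -/
def sobNorm (p : ℝ) (Ω : Set Pt) (F : Pt → ℝ) : ℝ := sobEnergy p Ω F ^ (1 / p)

/-- Membership in the homogeneous Sobolev space `L^{2,p}(ℝ²)` (we work with `C²`
representatives with finite seminorm). -/
def MemSob (p : ℝ) (F : Pt → ℝ) : Prop :=
  ContDiff ℝ 2 F ∧ Integrable fun x => ‖iteratedFDeriv ℝ 2 F x‖ ^ p

/-- The trace seminorm `‖f‖_{L^{2,p}(E)}` of `f : E → ℝ`. -/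
def traceSobNorm (p : ℝ) (E : Set Pt) (f : E → ℝ) : ℝ :=
  sInf {c : ℝ | ∃ F : Pt → ℝ, MemSob p F ∧ (∀ y : E, F y.1 = f y) ∧ c = sobNorm p univ F}

/-- `T` is a linear extension operator `L^{2,p}(E) → L^{2,p}(ℝ²)` with norm bound `M`. -/
def IsExtOpPlane (p : ℝ) (E : Set Pt) (M : ℝ) (T : (E → ℝ) →ₗ[ℝ] (Pt → ℝ)) : Prop :=
  ∀ f : E → ℝ, (∃ F : Pt → ℝ, MemSob p F ∧ ∀ y : E, F y.1 = f y) →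
    MemSob p (T f) ∧ (∀ y : E, T f y.1 = f y) ∧
      sobNorm p univ (T f) ≤ M * traceSobNorm p E f

/-- `‖Φ‖_{L^{1,p}(V)}^p = ∑_{v ∈ V₀} |Φ(v) − Φ(π(v))|^p W_v^{2−p}`. -/
def treeEnergy (p : ℝ) (V : Finset (List ℕ)) (W : List ℕ → ℝ) (Φ : List ℕ → ℝ) : ℝ :=
  ∑ v ∈ V.erase [], |Φ v - Φ v.dropLast| ^ p * W v ^ (2 - p)

def treeNorm (p : ℝ) (V : Finset (List ℕ)) (W : List ℕ → ℝ) (Φ : List ℕ → ℝ) : ℝ :=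
  treeEnergy p V W Φ ^ (1 / p)

/-- The type of leaves of `V`. -/
def Leaves (V : Finset (List ℕ)) : Type := {v : List ℕ // IsLeaf V v}

/-- The trace seminorm `‖φ‖_{L^{1,p}(∂V)}`. -/
def treeTraceNorm (p : ℝ) (V : Finset (List ℕ)) (W : List ℕ → ℝ) (φ : Leaves V → ℝ) : ℝ :=
  sInf {c : ℝ | ∃ Φ : List ℕ → ℝ, (∀ v : Leaves V, Φ v.1 = φ v) ∧ c = treeNorm p V W Φ}

/-- `H` is a linear extension operator `L^{1,p}(∂V) → L^{1,p}(V)` with norm bound `M`. -/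
def IsExtOpTree (p : ℝ) (V : Finset (List ℕ)) (W : List ℕ → ℝ) (M : ℝ)
    (H : (Leaves V → ℝ) →ₗ[ℝ] (List ℕ → ℝ)) : Prop :=
  ∀ φ : Leaves V → ℝ,
    (∀ v : Leaves V, H φ v.1 = φ v) ∧ treeNorm p V W (H φ) ≤ M * treeTraceNorm p V W φ

/-- Longest common prefix of two strings (the lowest common ancestor). -/
def lcp : List ℕ → List ℕ → List ℕ
  | a :: as, b :: bs => if a = b then a :: lcp as bs else []
  | _, _ => []

/-- The cluster `C_v ⊆ E₂` associated to a vertex `v ∈ V`. -/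
def Cluster (N : ℕ) (V : Finset (List ℕ)) (W : List ℕ → ℝ) (v : List ℕ) : Set Pt :=
  {x | ∃ u, IsLeaf V u ∧ v <+: u ∧ x = pt (Psi N W u) (W u)}

/-- The average `(∂₂G)_S` of the vertical derivative of `G` over `S`. -/
def d2avg (S : Set Pt) (G : Pt → ℝ) : ℝ :=
  ⨍ x in S, fderiv ℝ G x (EuclideanSpace.single 1 1)

end

/-! The first coordinates of the points of a cluster `C_v` lie in `[Ψ(v), Ψ(v) + 2W_v]`; these
intervals are nested along the tree, and those of two siblings are separated by a gap of at least
`W_{π(v)}/(2N)` because `ε ≤ 1/(4N)`. Take `K₁ = 2` and choose `M_C` so that the outer radius of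
`A_C` lies between `W_{π(C)}/(80N)` and `W_{π(C)}/(8N)`; there is room for this because the inner
radius `2κW_C` is at most `2κε W_{π(C)}`. Then `A_C` sits well inside `½B_{π(C)}`; if `C' ⊊ C`, the
whole annulus `A_{C'}` lies in the hole of `A_C`; and annuli of clusters in different branches lie
in closed balls whose centres are separated horizontally by more than the sum of their radii. -/

namespace List

theorem IsPrefix.prefix_dropLast {α : Type*} {l₁ l₂ : List α} (h : l₁ <+: l₂) (hne : l₁ ≠ l₂) :
    l₁ <+: l₂.dropLast :=
  prefix_of_prefix_length_le h l₂.dropLast_prefix <| by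
    have := h.length_le
    have := mt h.eq_of_length hne
    rw [length_dropLast]
    omega

theorem prefix_or_prefix_or_fork {α : Type*} (l₁ l₂ : List α) :
    l₁ <+: l₂ ∨ l₂ <+: l₁ ∨ ∃ w a b, a ≠ b ∧ w ++ [a] <+: l₁ ∧ w ++ [b] <+: l₂ := by
  induction l₁ generalizing l₂ with
  | nil => exact .inl nil_prefix
  | cons a l₁ ih =>
    cases l₂ with
    | nil => exact .inr (.inl nil_prefix)
    | cons b l₂ =>
      by_cases hab : a = b
      · subst hab
        rcases ih l₂ with h | h | ⟨w, c, d, hcd, h₁, h₂⟩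
        · exact .inl (cons_prefix_cons.mpr ⟨rfl, h⟩)
        · exact .inr (.inl (cons_prefix_cons.mpr ⟨rfl, h⟩))
        · exact .inr (.inr ⟨a :: w, c, d, hcd, cons_prefix_cons.mpr ⟨rfl, h₁⟩,
            cons_prefix_cons.mpr ⟨rfl, h₂⟩⟩)
      · exact .inr (.inr ⟨[], a, b, hab, by simp, by simp⟩)

theorem prefix_dropLast_of_append_singleton_prefix {α : Type*} {w v : List α} {a : α}
    (h : w ++ [a] <+: v) : w <+: v.dropLast :=
  ((prefix_append w [a]).trans h).prefix_dropLast fun hwv => by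
    simpa [hwv] using h.length_le

end List

section Tree

variable {N : ℕ} {V : Finset (List ℕ)} {W : List ℕ → ℝ} {ε : ℝ}

theorem IsNaryTree.mem_of_prefix (hV : IsNaryTree N V) {u v : List ℕ} (hu : u ∈ V)
    (h : v <+: u) : v ∈ V :=
  hV.2.1 u hu v h

theorem Psi_append_singleton (v : List ℕ) (a : ℕ) :
    Psi N W (v ++ [a]) = Psi N W v + W v * a / ((N : ℝ) - 1) := by
  unfold Psi
  rw [List.length_append, List.length_singleton, Finset.sum_range_succ]
  congr 1
  · refine Finset.sum_congr rfl fun i hi => ?_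
    rw [Finset.mem_range] at hi
    rw [List.take_append_of_le_length hi.le, List.getD_append _ _ _ _ hi]
  · simp

theorem Icc_Psi_subset_of_prefix (hV : IsNaryTree N V) (hW : RadiallyDecaying V W ε)
    (hε : ε ≤ 1 / 2) {u v : List ℕ} (hu : u ∈ V) (h : v <+: u) :
    Icc (Psi N W u) (Psi N W u + 2 * W u) ⊆ Icc (Psi N W v) (Psi N W v + 2 * W v) := by
  obtain ⟨t, rfl⟩ := h
  induction t using List.reverseRecOn with
  | nil => simp
  | append_singleton t a ih =>
    rw [← List.append_assoc] at hu ⊢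
    have hp : v ++ t ∈ V := hV.mem_of_prefix hu (List.prefix_append _ _)
    have hWp : 0 < W (v ++ t) := hW.2.1 _ hp
    have hWa : W (v ++ t ++ [a]) ≤ ε * W (v ++ t) := by
      simpa using hW.2.2 _ hu (by simp)
    have haN : (a : ℝ) + 1 ≤ N := by exact_mod_cast hV.2.2.1 _ hu a (by simp)
    have hdigit : (a : ℝ) / ((N : ℝ) - 1) ≤ 1 := div_le_one_of_le₀ (by linarith) (by linarith)
    have hstep₀ : 0 ≤ W (v ++ t) * a / ((N : ℝ) - 1) :=
      div_nonneg (by positivity) (by linarith)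
    have hstep₁ : W (v ++ t) * a / ((N : ℝ) - 1) ≤ W (v ++ t) := by
      rw [mul_div_assoc]
      exact mul_le_of_le_one_right hWp.le hdigit
    refine (Icc_subset_Icc ?_ ?_).trans (ih hp) <;> rw [Psi_append_singleton] <;> nlinarith

theorem W_le_of_prefix (hV : IsNaryTree N V) (hW : RadiallyDecaying V W ε) (hε : ε ≤ 1 / 2)
    {u v : List ℕ} (hu : u ∈ V) (h : v <+: u) : W u ≤ W v := by
  have hWu := hW.2.1 u hu
  have := (Icc_subset_Icc_iff (by linarith)).mp (Icc_Psi_subset_of_prefix hV hW hε hu h)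
  linarith

theorem Cluster_anti {v w : List ℕ} (h : w <+: v) : Cluster N V W v ⊆ Cluster N V W w :=
  fun _ ⟨u, hu, hvu, hx⟩ => ⟨u, hu, h.trans hvu, hx⟩

theorem fst_mem_Icc_of_mem_Cluster (hV : IsNaryTree N V) (hW : RadiallyDecaying V W ε)
    (hε : ε ≤ 1 / 2) {v : List ℕ} {x : Pt} (hx : x ∈ Cluster N V W v) :
    x 0 ∈ Icc (Psi N W v) (Psi N W v + 2 * W v) := by
  obtain ⟨u, hu, hvu, rfl⟩ := hx
  exact Icc_Psi_subset_of_prefix hV hW hε hu.1 hvu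
    (show Psi N W u ∈ _ from ⟨le_rfl, by linarith [hW.2.1 u hu.1]⟩)

theorem le_sub_fst_of_mem_Cluster_of_lt (hV : IsNaryTree N V) (hW : RadiallyDecaying V W ε)
    (hε : ε ≤ 1 / (4 * N)) {w : List ℕ} {a b : ℕ} (hab : a < b) (ha : w ++ [a] ∈ V)
    (hb : w ++ [b] ∈ V) {x x' : Pt} (hx : x ∈ Cluster N V W (w ++ [a]))
    (hx' : x' ∈ Cluster N V W (w ++ [b])) :
    W w / (2 * N) ≤ x' 0 - x 0 := by
  have hN : (2 : ℝ) ≤ N := by exact_mod_cast (by linarith [hV.2.2.1 _ hb b (by simp)] : 2 ≤ N)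
  have hε' : ε ≤ 1 / 2 := hε.trans (one_div_le_one_div_of_le (by norm_num) (by linarith))
  have hWw : 0 < W w := hW.2.1 w (hV.mem_of_prefix ha (List.prefix_append _ _))
  have hWa : W (w ++ [a]) ≤ ε * W w := by simpa using hW.2.2 _ ha (by simp)
  have hεW : ε * W w ≤ W w / (4 * N) := by
    simpa [div_eq_inv_mul] using mul_le_mul_of_nonneg_right hε hWw.le
  have hx0 := (fst_mem_Icc_of_mem_Cluster hV hW hε' hx).2
  have hx0' := (fst_mem_Icc_of_mem_Cluster hV hW hε' hx').1
  rw [Psi_append_singleton] at hx0 hx0'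
  have hgap : W w / N ≤ W w * b / ((N : ℝ) - 1) - W w * a / ((N : ℝ) - 1) := by
    have hab' : (a : ℝ) + 1 ≤ b := by exact_mod_cast hab
    rw [← sub_div, ← mul_sub, div_le_div_iff₀ (by positivity) (by linarith)]
    nlinarith [mul_le_mul_of_nonneg_left (by linarith : (1 : ℝ) ≤ b - a)
      (by positivity : 0 ≤ W w * N)]
  have : W w / (4 * N) = W w / N / 4 := by ring
  have : W w / (2 * N) = W w / N / 2 := by ring
  linarith

end Tree

section Annuli

def closedAnnulus {α : Type*} [PseudoMetricSpace α] (c : α) (r R : ℝ) : Set α :=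
  {x | r ≤ dist x c ∧ dist x c ≤ R}

theorem closedAnnulus_subset_closedBall {α : Type*} [PseudoMetricSpace α] {c : α} {r R : ℝ} :
    closedAnnulus c r R ⊆ closedBall c R :=
  fun _ hx => hx.2

theorem disjoint_ball_closedAnnulus {α : Type*} [PseudoMetricSpace α] {c : α} {r R : ℝ} :
    Disjoint (ball c r) (closedAnnulus c r R) :=
  Set.disjoint_left.mpr fun _ hx hx' => (mem_ball.mp hx).not_ge hx'.1

theorem exists_pow_ten_succ_mul_mem_Icc {a b : ℝ} (ha : 0 < a) (hab : 10 * a ≤ b) :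
    ∃ M : ℕ, 10 ^ (M + 1) * a ∈ Icc (b / 10) b := by
  obtain ⟨M, hle, hlt⟩ := exists_nat_pow_near (x := b / (10 * a)) (y := (10 : ℝ))
    (by rwa [one_le_div (by positivity)]) (by norm_num)
  rw [le_div_iff₀ (by positivity)] at hle
  rw [div_lt_iff₀ (by positivity)] at hlt
  exact ⟨M, by rw [div_le_iff₀ (by norm_num)]; linarith, by rw [pow_succ]; linarith⟩

variable {N : ℕ} {V : Finset (List ℕ)} {W : List ℕ → ℝ} {ε κ : ℝ} {y : List ℕ → Pt}
  {R : List ℕ → ℝ}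

theorem exists_annulus_exponent (hV : IsNaryTree N V) (hW : RadiallyDecaying V W ε)
    (hκ : 0 < κ) (hε : ε ≤ 1 / (160 * κ * N)) :
    ∃ M : List ℕ → ℕ, ∀ v ∈ V, v ≠ [] →
      W v.dropLast / (8 * N) / 10 ≤ 10 ^ (M v + 1) * (κ * 2 * W v) ∧
      10 ^ (M v + 1) * (κ * 2 * W v) ≤ W v.dropLast / (8 * N) := by
  have : ∀ v, ∃ m : ℕ, v ∈ V → v ≠ [] →
      W v.dropLast / (8 * N) / 10 ≤ 10 ^ (m + 1) * (κ * 2 * W v) ∧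
      10 ^ (m + 1) * (κ * 2 * W v) ≤ W v.dropLast / (8 * N) := by
    intro v
    by_cases hv : v ∈ V ∧ v ≠ []
    · have hWv := hW.2.1 v hv.1
      have hWπ := hW.2.1 _ (hV.mem_of_prefix hv.1 v.dropLast_prefix)
      have hsmall : 10 * (κ * 2 * W v) ≤ W v.dropLast / (8 * N) := calc
        10 * (κ * 2 * W v) ≤ 20 * κ * (ε * W v.dropLast) := by
          nlinarith [hW.2.2 v hv.1 hv.2]
        _ ≤ 20 * κ * (1 / (160 * κ * N) * W v.dropLast) := by gcongr
        _ = W v.dropLast / (8 * N) := by field_simp; ring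
      obtain ⟨m, hm⟩ := exists_pow_ten_succ_mul_mem_Icc (by positivity) hsmall
      exact ⟨m, fun _ _ => hm⟩
    · exact ⟨0, fun h₁ h₂ => (hv ⟨h₁, h₂⟩).elim⟩
  choose M hM using this
  exact ⟨M, hM⟩

theorem dist_center_le_of_prefix (hy : ∀ v ∈ V, y v ∈ Cluster N V W v)
    (hball : ∀ v ∈ V, Cluster N V W v ⊆ closedBall (y v) (2 * W v)) {u v : List ℕ}
    (hu : u ∈ V) (hv : v ∈ V) (h : v <+: u) : dist (y u) (y v) ≤ 2 * W v :=
  mem_closedBall.mp (hball v hv (Cluster_anti h (hy u hu)))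

theorem closedAnnulus_subset_parent (hV : IsNaryTree N V) (hW : RadiallyDecaying V W ε)
    (hκ : 3 ≤ κ) (hy : ∀ v ∈ V, y v ∈ Cluster N V W v)
    (hball : ∀ v ∈ V, Cluster N V W v ⊆ closedBall (y v) (2 * W v)) {v : List ℕ} (hv : v ∈ V)
    {r R : ℝ} (hR : R ≤ W v.dropLast) :
    closedAnnulus (y v) r R ⊆ closedBall (y v.dropLast) (κ * 2 * W v.dropLast / 2) := by
  have hπ := hV.mem_of_prefix hv v.dropLast_prefix
  have hWπ := hW.2.1 _ hπ
  refine closedAnnulus_subset_closedBall.trans (closedBall_subset_closedBall' ?_)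
  nlinarith [dist_center_le_of_prefix hy hball hv hπ v.dropLast_prefix]

theorem disjoint_closedAnnulus_of_prefix (hV : IsNaryTree N V) (hW : RadiallyDecaying V W ε)
    (hε : ε ≤ 1 / 2) (hκ : 2 ≤ κ) (hy : ∀ v ∈ V, y v ∈ Cluster N V W v)
    (hball : ∀ v ∈ V, Cluster N V W v ⊆ closedBall (y v) (2 * W v)) {v v' : List ℕ}
    (hv : v ∈ V) (hv' : v' ∈ V) (h : v <+: v') (hne : v ≠ v') {R R' : ℝ}
    (hR' : R' ≤ W v'.dropLast) :
    Disjoint (closedAnnulus (y v) (κ * 2 * W v) R) (closedAnnulus (y v') (κ * 2 * W v') R') := by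
  have hWv := hW.2.1 v hv
  have hπ' := W_le_of_prefix hV hW hε (hV.mem_of_prefix hv' v'.dropLast_prefix)
    (h.prefix_dropLast hne)
  have hinner : R' + dist (y v') (y v) < κ * 2 * W v := by
    nlinarith [dist_center_le_of_prefix hy hball hv' hv h]
  exact (disjoint_ball_closedAnnulus.mono_left
    (closedAnnulus_subset_closedBall.trans (closedBall_subset_ball' hinner))).symm

theorem disjoint_closedBall_of_fork (hV : IsNaryTree N V) (hW : RadiallyDecaying V W ε)
    (hε : ε ≤ 1 / (4 * N)) (hy : ∀ v ∈ V, y v ∈ Cluster N V W v) {v v' w : List ℕ} {a b : ℕ}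
    (hv : v ∈ V) (hv' : v' ∈ V) (hab : a < b) (ha : w ++ [a] <+: v) (hb : w ++ [b] <+: v')
    {R R' : ℝ} (hR : R ≤ W v.dropLast / (8 * N)) (hR' : R' ≤ W v'.dropLast / (8 * N)) :
    Disjoint (closedBall (y v) R) (closedBall (y v') R') := by
  have hwa := hV.mem_of_prefix hv ha
  have hwb := hV.mem_of_prefix hv' hb
  have hN : (2 : ℝ) ≤ N := by exact_mod_cast (by linarith [hV.2.2.1 _ hwb b (by simp)] : 2 ≤ N)
  have hε' : ε ≤ 1 / 2 := hε.trans (one_div_le_one_div_of_le (by norm_num) (by linarith))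
  have hWw : 0 < W w := hW.2.1 w (hV.mem_of_prefix hwa (List.prefix_append _ _))
  have hWπ := W_le_of_prefix hV hW hε' (hV.mem_of_prefix hv v.dropLast_prefix)
    (List.prefix_dropLast_of_append_singleton_prefix ha)
  have hWπ' := W_le_of_prefix hV hW hε' (hV.mem_of_prefix hv' v'.dropLast_prefix)
    (List.prefix_dropLast_of_append_singleton_prefix hb)
  have hsep := le_sub_fst_of_mem_Cluster_of_lt hV hW hε hab hwa hwb
    (Cluster_anti ha (hy v hv)) (Cluster_anti hb (hy v' hv'))
  have hdist : (y v') 0 - (y v) 0 ≤ dist (y v) (y v') := by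
    have := PiLp.dist_apply_le (y v) (y v') 0
    rw [Real.dist_eq, abs_sub_comm] at this
    exact (le_abs_self _).trans this
  refine closedBall_disjoint_closedBall ?_
  have : W v.dropLast / (8 * N) ≤ W w / (8 * N) := by gcongr
  have : W v'.dropLast / (8 * N) ≤ W w / (8 * N) := by gcongr
  have : W w / (8 * N) = W w / (2 * N) / 4 := by ring
  have : 0 < W w / (2 * N) := by positivity
  linarith

theorem disjoint_closedAnnulus (hN : 2 ≤ N) (hV : IsNaryTree N V)
    (hW : RadiallyDecaying V W ε) (hε : ε ≤ 1 / (4 * N)) (hκ : 2 ≤ κ)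
    (hy : ∀ v ∈ V, y v ∈ Cluster N V W v)
    (hball : ∀ v ∈ V, Cluster N V W v ⊆ closedBall (y v) (2 * W v))
    (hR : ∀ v ∈ V, v ≠ [] → R v ≤ W v.dropLast / (8 * N)) {v v' : List ℕ} (hv : v ∈ V)
    (hv' : v' ∈ V) (hv₀ : v ≠ []) (hv'₀ : v' ≠ []) (hne : v ≠ v') :
    Disjoint (closedAnnulus (y v) (κ * 2 * W v) (R v))
      (closedAnnulus (y v') (κ * 2 * W v') (R v')) := by
  have hNR : (2 : ℝ) ≤ N := by exact_mod_cast hN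
  have hN' : (1 : ℝ) ≤ 8 * N := by linarith
  have hε' : ε ≤ 1 / 2 := hε.trans (one_div_le_one_div_of_le (by norm_num) (by linarith))
  have hR₁ : ∀ u ∈ V, u ≠ [] → R u ≤ W u.dropLast := fun u hu hu₀ =>
    (hR u hu hu₀).trans (div_le_self (hW.2.1 _ (hV.mem_of_prefix hu u.dropLast_prefix)).le hN')
  rcases List.prefix_or_prefix_or_fork v v' with h | h | ⟨w, a, b, hab, ha, hb⟩
  · exact disjoint_closedAnnulus_of_prefix hV hW hε' hκ hy hball hv hv' h hne (hR₁ v' hv' hv'₀)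
  · exact (disjoint_closedAnnulus_of_prefix hV hW hε' hκ hy hball hv' hv h hne.symm
      (hR₁ v hv hv₀)).symm
  · refine Disjoint.mono closedAnnulus_subset_closedBall closedAnnulus_subset_closedBall ?_
    rcases hab.lt_or_gt with hab | hab
    · exact disjoint_closedBall_of_fork hV hW hε hy hv hv' hab ha hb (hR v hv hv₀) (hR v' hv' hv'₀)
    · exact (disjoint_closedBall_of_fork hV hW hε hy hv' hv hab hb ha (hR v' hv' hv'₀)
        (hR v hv hv₀)).symm

end Annuli

/-- the family of annuli used in the proof of Lemma 9 of the paper. -/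
theorem statement18 :
    ∃ K₁ κ₁ : ℝ, 1 < K₁ ∧ 10 < κ₁ ∧
      ∀ κ : ℝ, κ₁ ≤ κ →
        ∃ k₀ : ℝ, 0 < k₀ ∧
          ∀ N : ℕ, 2 ≤ N →
            ∃ c Cc : ℝ, 0 < c ∧ 0 < Cc ∧
              ∀ (V : Finset (List ℕ)) (W : List ℕ → ℝ) (ε : ℝ) (y : List ℕ → Pt),
                TreeHyp k₀ N V W ε → DepthAtLeastOne V →
                (∀ v ∈ V, y v ∈ Cluster N V W v) →
                (∀ v ∈ V, Cluster N V W v ⊆ closedBall (y v) (K₁ * W v)) →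
                ∃ M : List ℕ → ℕ,
                  (∀ v ∈ V, v ≠ [] →
                    c * W v.dropLast ≤ (10 : ℝ) ^ (M v + 1) * (κ * K₁ * W v) ∧
                    (10 : ℝ) ^ (M v + 1) * (κ * K₁ * W v) ≤ Cc * W v.dropLast) ∧
                  (∀ v ∈ V, v ≠ [] →
                    {x : Pt | κ * K₁ * W v ≤ dist x (y v) ∧
                        dist x (y v) ≤ (10 : ℝ) ^ (M v + 1) * (κ * K₁ * W v)} ⊆
                      closedBall (y v.dropLast) (κ * K₁ * W v.dropLast / 2)) ∧
                  (∀ v ∈ V, v ≠ [] → ∀ v' ∈ V, v' ≠ [] →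
                    Cluster N V W v ≠ Cluster N V W v' →
                      {x : Pt | κ * K₁ * W v ≤ dist x (y v) ∧
                          dist x (y v) ≤ (10 : ℝ) ^ (M v + 1) * (κ * K₁ * W v)} ∩
                        {x : Pt | κ * K₁ * W v' ≤ dist x (y v') ∧
                          dist x (y v') ≤ (10 : ℝ) ^ (M v' + 1) * (κ * K₁ * W v')} =
                        ∅) := by
  refine ⟨2, 11, by norm_num, by norm_num, fun κ hκ => ⟨1 / (160 * κ), by positivity, ?_⟩⟩
  intro N hN
  have hNR : (2 : ℝ) ≤ N := by exact_mod_cast hN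
  refine ⟨1 / (80 * N), 1 / (8 * N), by positivity, by positivity, ?_⟩
  rintro V W ε y ⟨-, hV, -, hεk, hW⟩ - hy hball
  have hε : ε ≤ 1 / (160 * κ * N) := by rwa [← div_div]
  have hε₄ : ε ≤ 1 / (4 * N) := hε.trans (one_div_le_one_div_of_le (by positivity) (by nlinarith))
  obtain ⟨M, hM⟩ := exists_annulus_exponent hV hW (by linarith) hε
  have hR : ∀ v ∈ V, v ≠ [] → 10 ^ (M v + 1) * (κ * 2 * W v) ≤ W v.dropLast := fun v hv hv₀ =>
    (hM v hv hv₀).2.trans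
      (div_le_self (hW.2.1 _ (hV.mem_of_prefix hv v.dropLast_prefix)).le (by linarith))
  refine ⟨M, fun v hv hv₀ => ⟨?_, ?_⟩, fun v hv hv₀ => ?_, fun v hv hv₀ v' hv' hv'₀ hC => ?_⟩
  · exact le_of_eq_of_le (by ring) (hM v hv hv₀).1
  · exact (hM v hv hv₀).2.trans_eq (by ring)
  · exact closedAnnulus_subset_parent hV hW (by linarith) hy hball hv (hR v hv hv₀)
  · exact (disjoint_closedAnnulus hN hV hW hε₄ (by linarith) hy hball
      (fun v hv hv₀ => (hM v hv hv₀).2) hv hv' hv₀ hv'₀ (mt (congrArg (Cluster N V W)) hC)).inter_eq
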